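/- arXiv:2207.10240 — 2 statements merged into one kernel-verified Lean document; each statement's English description precedes it below -/
import Mathlib

section
/- Let U be a finite universe, S₁, …, S_m ⊆ U a family of sets with m ≥ 1 such that every u ∈ U belongs to at least one S_i, and ρ ∈ (0,1]. Construct the MobileVaccClinic instance on the real line with locations C = {1, …, m} ⊆ ℝ and, for each u ∈ U, a person p_u with travel set S_{p_u} = {i : u ∈ S_i}. Suppose the Partial Set Cover instance (U, {S₁,…,S_m}, ρ) has a feasible solution of size at most k. Then: (i) the optimal radius R* of the MobileVaccClinic instance with outliers and budget k equals 0; and (ii) every F ⊆ C with |F| ≤ k whose radius is strictly less than 1 (in particular, any F achieving radius at most α·R* = 0 for any finite α) satisfies |{u : d(S_{p_u}, F) = 0}| ≥ ⌊ρ|U|⌋, so {S_i : i ∈ F} is a feasible Partial Set Cover solution of size at most k. -/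
/-!
STATEMENT 6: In the reduction from Partial Set Cover to MobileVaccClinic on the
Euclidean line (locations `C = {1, …, m} ⊆ ℝ`, one person per element `u` with
travel set `{i : u ∈ S i}`), if the Partial Set Cover instance has a feasible
solution of size at most `k`, then (i) the optimal radius `R*` of the
MobileVaccClinic instance with outliers and budget `k` equals `0`, and (ii)
every `F ⊆ C` with `|F| ≤ k` achieving radius strictly less than `1` (in
particular radius at most `α · R* = 0` for any finite `α`) serves `⌊ρ|U|⌋`
people at distance `0`, and yields a feasible Partial Set Cover solution of
size at most `k`.
-/

attribute [local instance] Classical.propDecidable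

noncomputable section

/-- `d(A, B) = min_{j ∈ A, j' ∈ B} d(j, j')` for finite (nonempty) sets. -/
def setDist {C : Type*} [MetricSpace C] (A B : Finset C) : ℝ :=
  sInf {r : ℝ | ∃ j ∈ A, ∃ j' ∈ B, r = dist j j'}

/-- The point of the real line corresponding to index `i`, i.e. `i + 1 ∈ {1, …, m}`. -/
def loc {m : ℕ} (i : Fin m) : ℝ := (i : ℕ) + 1

/-- The location set `C = {1, 2, …, m} ⊆ ℝ`. -/
def Cset (m : ℕ) : Finset ℝ := (Finset.univ : Finset (Fin m)).image loc

/-- The travel set of the person corresponding to element `u`: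
`S_{p_u} = {i ∈ C : u ∈ S i}`. -/
def travel {U : Type*} [Fintype U] {m : ℕ} (S : Fin m → Finset U) (u : U) : Finset ℝ :=
  (Finset.univ.filter fun i : Fin m => u ∈ S i).image loc

/-- The optimal radius `R*` of a MobileVaccClinic instance with outliers on the
real line, with locations `C`, budget `k`, requirement `ρ`, and people indexed
by the fintype `ι` with travel sets `T p`. -/
def RstarLine (C : Finset ℝ) (k : ℕ) (ρ : ℝ) {ι : Type*} [Fintype ι]
    (T : ι → Finset ℝ) : ℝ :=
  sInf {R : ℝ | ∃ F : Finset ℝ, F ⊆ C ∧ F.Nonempty ∧ F.card ≤ k ∧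
    ⌊ρ * (Fintype.card ι : ℝ)⌋₊ ≤
      (Finset.univ.filter fun p : ι => setDist (T p) F ≤ R).card}

/-!
All locations are integers, so a person is within distance `< 1` of `F ⊆ C` only if some
location of their travel set lies in `F`, and then the distance is `0`. Hence a solution `F`
of radius `< 1` serves exactly the elements covered by `{S i : loc i ∈ F}`, and conversely a
partial set cover `G` gives the radius-`0` solution `loc '' G`. This proves (ii) and, when
`⌊ρ|U|⌋ ≥ 1`, also `R* = 0`; when `⌊ρ|U|⌋ = 0` the radius constraint is vacuous and
`R* = 0` holds because `sInf` of `∅` and of `ℝ` are both `0`.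
-/

open Finset

section SetDist

variable {C : Type*} [MetricSpace C]

lemma setDist_nonneg (A B : Finset C) : 0 ≤ setDist A B :=
  Real.sInf_nonneg <| by
    rintro _ ⟨_, _, _, _, rfl⟩
    exact dist_nonneg

lemma setDist_le_dist {A B : Finset C} {a b : C} (ha : a ∈ A) (hb : b ∈ B) :
    setDist A B ≤ dist a b :=
  csInf_le ⟨0, fun _ ⟨_, _, _, _, hr⟩ => hr ▸ dist_nonneg⟩ ⟨a, ha, b, hb, rfl⟩

lemma setDist_eq_zero_of_mem {A B : Finset C} {a : C} (hA : a ∈ A) (hB : a ∈ B) :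
    setDist A B = 0 :=
  le_antisymm (by simpa using setDist_le_dist hA hB) (setDist_nonneg A B)

lemma exists_dist_eq_setDist {A B : Finset C} (hA : A.Nonempty) (hB : B.Nonempty) :
    ∃ a ∈ A, ∃ b ∈ B, dist a b = setDist A B := by
  obtain ⟨a, ha⟩ := hA
  obtain ⟨b, hb⟩ := hB
  have hne : {r : ℝ | ∃ j ∈ A, ∃ j' ∈ B, r = dist j j'}.Nonempty := ⟨_, a, ha, b, hb, rfl⟩
  have hfin : {r : ℝ | ∃ j ∈ A, ∃ j' ∈ B, r = dist j j'}.Finite := by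
    refine ((A ×ˢ B).image fun p => dist p.1 p.2).finite_toSet.subset ?_
    rintro _ ⟨j, hj, j', hj', rfl⟩
    exact mem_image.2 ⟨(j, j'), mem_product.2 ⟨hj, hj'⟩, rfl⟩
  obtain ⟨j, hj, j', hj', h⟩ := hne.csInf_mem hfin
  exact ⟨j, hj, j', hj', h.symm⟩

end SetDist

lemma loc_injective {m : ℕ} : Function.Injective (loc (m := m)) := fun i j h => by
  simpa [loc, Fin.ext_iff] using h

lemma eq_of_dist_loc_lt_one {m : ℕ} {i j : Fin m} (h : dist (loc i) (loc j) < 1) : i = j := by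
  rw [Real.dist_eq, loc, loc, add_sub_add_right_eq_sub, abs_lt] at h
  have hlt : ((i : ℕ) : ℤ) - (j : ℕ) < 1 := by exact_mod_cast h.2
  have hgt : -1 < ((i : ℕ) : ℤ) - (j : ℕ) := by exact_mod_cast h.1
  exact Fin.ext (by omega)

lemma image_loc_subset_Cset {m : ℕ} (G : Finset (Fin m)) : G.image loc ⊆ Cset m :=
  image_subset_image (subset_univ G)

lemma image_loc_filter_mem {m : ℕ} {F : Finset ℝ} (hF : F ⊆ Cset m) :
    (univ.filter fun i : Fin m => loc i ∈ F).image loc = F := by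
  ext x
  simp only [mem_image, mem_filter, mem_univ, true_and]
  refine ⟨fun ⟨i, hi, hx⟩ => hx ▸ hi, fun hx => ?_⟩
  obtain ⟨i, -, rfl⟩ := mem_image.1 (hF hx)
  exact ⟨i, hx, rfl⟩

section Reduction

variable {U : Type*} [Fintype U] {m : ℕ} (S : Fin m → Finset U)

lemma loc_mem_travel {u : U} {i : Fin m} (hu : u ∈ S i) : loc i ∈ travel S u :=
  mem_image_of_mem _ (mem_filter.2 ⟨mem_univ _, hu⟩)

lemma exists_mem_of_setDist_travel_lt_one {u : U} (hu : ∃ i, u ∈ S i) {F : Finset ℝ}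
    (hF : F ⊆ Cset m) (hFne : F.Nonempty) (h : setDist (travel S u) F < 1) :
    ∃ i, u ∈ S i ∧ loc i ∈ F := by
  obtain ⟨i, hi⟩ := hu
  obtain ⟨a, ha, b, hb, hab⟩ := exists_dist_eq_setDist ⟨_, loc_mem_travel S hi⟩ hFne
  obtain ⟨j, hj, rfl⟩ := mem_image.1 ha
  obtain ⟨j', -, rfl⟩ := mem_image.1 (hF hb)
  obtain rfl := eq_of_dist_loc_lt_one (hab.trans_lt h)
  exact ⟨j, (mem_filter.1 hj).2, hb⟩

lemma biUnion_subset_filter_setDist_eq_zero (G : Finset (Fin m)) :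
    G.biUnion S ⊆ univ.filter fun u => setDist (travel S u) (G.image loc) = 0 := by
  intro u hu
  obtain ⟨i, hiG, hui⟩ := mem_biUnion.1 hu
  exact mem_filter.2
    ⟨mem_univ _, setDist_eq_zero_of_mem (loc_mem_travel S hui) (mem_image_of_mem _ hiG)⟩

lemma filter_setDist_travel_le_subset_biUnion (hcov : ∀ u : U, ∃ i, u ∈ S i)
    {F : Finset ℝ} (hF : F ⊆ Cset m) (hFne : F.Nonempty) {R : ℝ} (hR : R < 1) :
    (univ.filter fun u => setDist (travel S u) F ≤ R) ⊆
      (univ.filter fun i : Fin m => loc i ∈ F).biUnion S := by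
  intro u hu
  obtain ⟨i, hui, hiF⟩ :=
    exists_mem_of_setDist_travel_lt_one S (hcov u) hF hFne ((mem_filter.1 hu).2.trans_lt hR)
  exact mem_biUnion.2 ⟨i, mem_filter.2 ⟨mem_univ _, hiF⟩, hui⟩

end Reduction

section Rstar

variable (C : Finset ℝ) (k : ℕ) (ρ : ℝ) {ι : Type*} [Fintype ι] (T : ι → Finset ℝ)

lemma RstarLine_eq_zero_of_floor_eq_zero (h : ⌊ρ * (Fintype.card ι : ℝ)⌋₊ = 0) :
    RstarLine C k ρ T = 0 := by
  simp only [RstarLine, h, zero_le, and_true]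
  by_cases hF : ∃ F : Finset ℝ, F ⊆ C ∧ F.Nonempty ∧ F.card ≤ k
  · simp only [hF, Set.ofPred_true, Real.sInf_univ]
  · simp only [hF, Set.ofPred_false, Real.sInf_empty]

lemma RstarLine_eq_zero_of_exists (hpos : 0 < ⌊ρ * (Fintype.card ι : ℝ)⌋₊)
    (h : ∃ F : Finset ℝ, F ⊆ C ∧ F.Nonempty ∧ F.card ≤ k ∧
      ⌊ρ * (Fintype.card ι : ℝ)⌋₊ ≤ (univ.filter fun p => setDist (T p) F = 0).card) :
    RstarLine C k ρ T = 0 := by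
  refine IsLeast.csInf_eq ⟨?_, ?_⟩
  · obtain ⟨F, hFC, hFne, hFk, hcard⟩ := h
    refine ⟨F, hFC, hFne, hFk, hcard.trans (card_le_card ?_)⟩
    exact monotone_filter_right _ fun _ _ h0 => h0.le
  · rintro R ⟨F, -, -, -, hcard⟩
    obtain ⟨p, hp⟩ := card_pos.1 (hpos.trans_le hcard)
    exact (setDist_nonneg _ _).trans (mem_filter.1 hp).2

end Rstar

theorem stmt6_general {U : Type*} [Fintype U] (m : ℕ)
    (S : Fin m → Finset U) (hcov : ∀ u : U, ∃ i, u ∈ S i)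
    (ρ : ℝ) (k : ℕ)
    (hfeas : ∃ G : Finset (Fin m), G.card ≤ k ∧
      ⌊ρ * (Fintype.card U : ℝ)⌋₊ ≤ (G.biUnion S).card) :
    RstarLine (Cset m) k ρ (travel S) = 0 ∧
    (∀ F : Finset ℝ, F ⊆ Cset m → F.Nonempty → F.card ≤ k →
      ∀ R : ℝ, R < 1 →
        ⌊ρ * (Fintype.card U : ℝ)⌋₊ ≤
          (Finset.univ.filter fun u : U => setDist (travel S u) F ≤ R).card →
        (⌊ρ * (Fintype.card U : ℝ)⌋₊ ≤
            (Finset.univ.filter fun u : U => setDist (travel S u) F = 0).card ∧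
          ∃ G : Finset (Fin m), G.card ≤ k ∧ (∀ i ∈ G, loc i ∈ F) ∧
            ⌊ρ * (Fintype.card U : ℝ)⌋₊ ≤ (G.biUnion S).card)) := by
  refine ⟨?_, fun F hF hFne hFk R hR hserved => ?_⟩
  · rcases Nat.eq_zero_or_pos ⌊ρ * (Fintype.card U : ℝ)⌋₊ with h0 | hpos
    · exact RstarLine_eq_zero_of_floor_eq_zero _ _ _ _ h0
    obtain ⟨G, hGk, hG⟩ := hfeas
    obtain ⟨i, hiG, -⟩ := biUnion_nonempty.1 (card_pos.1 (hpos.trans_le hG))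
    exact RstarLine_eq_zero_of_exists _ _ _ _ hpos ⟨G.image loc, image_loc_subset_Cset G,
      ⟨_, mem_image_of_mem _ hiG⟩, card_image_le.trans hGk,
      hG.trans (card_le_card (biUnion_subset_filter_setDist_eq_zero S G))⟩
  set G := univ.filter fun i : Fin m => loc i ∈ F
  have hGF : G.image loc = F := image_loc_filter_mem hF
  have hle := filter_setDist_travel_le_subset_biUnion S hcov hF hFne hR
  have hzero := hGF ▸ biUnion_subset_filter_setDist_eq_zero S G
  refine ⟨hserved.trans (card_le_card (hle.trans hzero)), G, ?_,
    fun i hi => (mem_filter.1 hi).2, hserved.trans (card_le_card hle)⟩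
  rw [← card_image_of_injective G loc_injective, hGF]
  exact hFk

theorem stmt6 {U : Type*} [Fintype U] (m : ℕ) (hm : 1 ≤ m)
    (S : Fin m → Finset U) (hcov : ∀ u : U, ∃ i, u ∈ S i)
    (ρ : ℝ) (hρ0 : 0 < ρ) (hρ1 : ρ ≤ 1) (k : ℕ)
    (hfeas : ∃ G : Finset (Fin m), G.card ≤ k ∧
      ⌊ρ * (Fintype.card U : ℝ)⌋₊ ≤ (G.biUnion S).card) :
    RstarLine (Cset m) k ρ (travel S) = 0 ∧
    (∀ F : Finset ℝ, F ⊆ Cset m → F.Nonempty → F.card ≤ k →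
      ∀ R : ℝ, R < 1 →
        ⌊ρ * (Fintype.card U : ℝ)⌋₊ ≤
          (Finset.univ.filter fun u : U => setDist (travel S u) F ≤ R).card →
        (⌊ρ * (Fintype.card U : ℝ)⌋₊ ≤
            (Finset.univ.filter fun u : U => setDist (travel S u) F = 0).card ∧
          ∃ G : Finset (Fin m), G.card ≤ k ∧ (∀ i ∈ G, loc i ∈ F) ∧
            ⌊ρ * (Fintype.card U : ℝ)⌋₊ ≤ (G.biUnion S).card)) :=
  stmt6_general m S hcov ρ k hfeas

end
end

section
/- Fix ε ≥ 0 and δ ≥ 0. Let M be any randomized mechanism that takes a Partial Set Cover instance (with a fixed public set family S and requirement ρ, and private universe U) and outputs a random subfamily of S, and suppose M is (ε, δ)-differentially private with respect to neighboring universes. If there is p such that on every Partial Set Cover instance M outputs an optimal solution with probability at least p, then p ≤ (e^ε + δ)/(1 + e^ε). In particular, when δ < 1, no (ε, δ)-differentially private mechanism can solve Partial Set Cover exactly with probability tending to 1. -/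
open scoped ENNReal

/-!
STATEMENT 9: Fix `ε, δ ≥ 0`. Let `M` be any randomized mechanism taking a
Partial Set Cover instance (public family `S : Fin m → Finset ℕ` and
requirement `ρ`, private universe `U : Finset ℕ`) to a distribution over
subfamilies (index sets `G : Finset (Fin m)`), and suppose `M` is
`(ε, δ)`-differentially private with respect to universes differing in exactly
one element. If `M` outputs an optimal solution with probability at least `p`
on every instance, then `p ≤ (e^ε + δ) / (1 + e^ε)`.
-/

/-- Neighboring universes: they differ in exactly one element. -/
def NeighborU (U U' : Finset ℕ) : Prop :=
  ∃ x : ℕ, (U' = insert x U ∧ x ∉ U) ∨ (U = insert x U' ∧ x ∉ U')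

/-- Feasibility for Partial Set Cover: the subfamily indexed by `G` covers at
least `⌊ρ|U|⌋` elements of the universe `U`. -/
def pscFeasible {m : ℕ} (S : Fin m → Finset ℕ) (ρ : ℝ) (U : Finset ℕ)
    (G : Finset (Fin m)) : Prop :=
  ⌊ρ * (U.card : ℝ)⌋₊ ≤ ((G.biUnion S) ∩ U).card

/-- Optimality: feasible of minimum cardinality. -/
def pscOptimal {m : ℕ} (S : Fin m → Finset ℕ) (ρ : ℝ) (U : Finset ℕ)
    (G : Finset (Fin m)) : Prop :=
  pscFeasible S ρ U G ∧
    ∀ G' : Finset (Fin m), pscFeasible S ρ U G' → G.card ≤ G'.card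

/-!
Take the single set `{0}`, `ρ = 1`, and the neighbouring universes `{0}` and `∅`; both instances
have optimal solutions. On `∅` the only optimal solution is the empty subfamily, which is not even
feasible on `{0}`, so the two events "the output is optimal" are disjoint. With success probability
`p` on both instances, privacy gives
`p ≤ Pr[M({0}) ∈ E] ≤ e^ε · Pr[M(∅) ∈ E] + δ ≤ e^ε (1 - p) + δ`, which rearranges to the bound.
-/

theorem ENNReal.le_div_one_add_of_le_mul_one_sub_add {p e d : ℝ≥0∞} (hp : p ≤ 1) (he : e ≠ ∞)
    (h : p ≤ e * (1 - p) + d) : p ≤ (e + d) / (1 + e) := by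
  rw [ENNReal.le_div_iff_mul_le (Or.inl (by simp)) (Or.inl (ENNReal.add_ne_top.2 ⟨by simp, he⟩))]
  calc p * (1 + e) = p + e * p := by ring
    _ ≤ e * (1 - p) + d + e * p := by gcongr
    _ = e * (1 - p + p) + d := by ring
    _ = e + d := by rw [tsub_add_cancel_of_le hp, mul_one]

namespace PMF

variable {α : Type*}

theorem toOuterMeasure_add_le_one (q : PMF α) {s t : Set α} (hst : Disjoint s t) :
    q.toOuterMeasure s + q.toOuterMeasure t ≤ 1 := by
  rw [toOuterMeasure_apply, toOuterMeasure_apply, ← ENNReal.tsum_add]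
  simp_rw [← Set.indicator_union_of_disjoint hst]
  rw [← toOuterMeasure_apply]
  exact (q.toOuterMeasure.mono (Set.subset_univ _)).trans_eq
    ((toOuterMeasure_apply_eq_one_iff q _).2 (Set.subset_univ _))

theorem toOuterMeasure_le_one (q : PMF α) (s : Set α) : q.toOuterMeasure s ≤ 1 := by
  simpa using q.toOuterMeasure_add_le_one (Set.disjoint_empty s)

theorem le_div_of_disjoint_of_le_mul_add (q q' : PMF α) {E F : Set α} (hEF : Disjoint E F)
    {p e d : ℝ≥0∞} (he : e ≠ ∞) (hqE : p ≤ q.toOuterMeasure E) (hq'F : p ≤ q'.toOuterMeasure F)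
    (hdp : q.toOuterMeasure E ≤ e * q'.toOuterMeasure E + d) : p ≤ (e + d) / (1 + e) := by
  have hp : p ≤ 1 := hq'F.trans (q'.toOuterMeasure_le_one F)
  have hq'E : q'.toOuterMeasure E ≤ 1 - p :=
    ENNReal.le_sub_of_add_le_right (ne_top_of_le_ne_top ENNReal.one_ne_top hp)
      ((add_le_add_right hq'F _).trans (q'.toOuterMeasure_add_le_one hEF))
  refine ENNReal.le_div_one_add_of_le_mul_one_sub_add hp he ?_
  calc p ≤ q.toOuterMeasure E := hqE
    _ ≤ e * q'.toOuterMeasure E + d := hdp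
    _ ≤ e * (1 - p) + d := by gcongr

end PMF

theorem neighborU_singleton_empty (x : ℕ) : NeighborU {x} ∅ :=
  ⟨x, .inr ⟨rfl, Finset.notMem_empty x⟩⟩

section PartialSetCover

variable {m : ℕ} (S : Fin m → Finset ℕ)

theorem pscOptimal_empty_iff (ρ : ℝ) (G : Finset (Fin m)) : pscOptimal S ρ ∅ G ↔ G = ∅ := by
  have hfeas : ∀ G', pscFeasible S ρ ∅ G' := fun G' => by simp [pscFeasible]
  refine ⟨fun hG => Finset.card_eq_zero.1 (Nat.le_zero.1 (hG.2 ∅ (hfeas ∅))), ?_⟩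
  rintro rfl
  exact ⟨hfeas ∅, fun G' _ => by simp⟩

theorem not_pscFeasible_empty {U : Finset ℕ} (hU : U.Nonempty) : ¬ pscFeasible S 1 U ∅ := by
  simpa [pscFeasible] using hU.ne_empty

theorem disjoint_pscOptimal_empty {U : Finset ℕ} (hU : U.Nonempty) :
    Disjoint {G | pscOptimal S 1 U G} {G | pscOptimal S 1 ∅ G} := by
  refine Set.disjoint_left.2 fun G hG hG₀ => ?_
  obtain rfl : G = ∅ := (pscOptimal_empty_iff S 1 G).1 hG₀
  exact not_pscFeasible_empty S hU hG.1

end PartialSetCover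

theorem stmt9_general (ε δ : ℝ)
    (M : ∀ m : ℕ, (Fin m → Finset ℕ) → ℝ → Finset ℕ → PMF (Finset (Fin m)))
    (hDP : ∀ (m : ℕ) (S : Fin m → Finset ℕ) (ρ : ℝ) (U U' : Finset ℕ),
      NeighborU U U' → ∀ E : Set (Finset (Fin m)),
        (M m S ρ U).toOuterMeasure E ≤
          ENNReal.ofReal (Real.exp ε) * (M m S ρ U').toOuterMeasure E +
            ENNReal.ofReal δ)
    (p : ℝ≥0∞)
    (hutil : ∀ (m : ℕ) (S : Fin m → Finset ℕ) (ρ : ℝ) (U : Finset ℕ),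
      0 < ρ → ρ ≤ 1 →
      p ≤ (M m S ρ U).toOuterMeasure {G | pscOptimal S ρ U G}) :
    p ≤ (ENNReal.ofReal (Real.exp ε) + ENNReal.ofReal δ) /
      (1 + ENNReal.ofReal (Real.exp ε)) := by
  let S : Fin 1 → Finset ℕ := fun _ => {0}
  exact PMF.le_div_of_disjoint_of_le_mul_add (M 1 S 1 {0}) (M 1 S 1 ∅)
    (disjoint_pscOptimal_empty S (Finset.singleton_nonempty 0)) ENNReal.ofReal_ne_top
    (hutil 1 S 1 {0} one_pos le_rfl) (hutil 1 S 1 ∅ one_pos le_rfl)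
    (hDP 1 S 1 {0} ∅ (neighborU_singleton_empty 0) _)

theorem stmt9 (ε δ : ℝ) (hε : 0 ≤ ε) (hδ : 0 ≤ δ)
    (M : ∀ m : ℕ, (Fin m → Finset ℕ) → ℝ → Finset ℕ → PMF (Finset (Fin m)))
    (hDP : ∀ (m : ℕ) (S : Fin m → Finset ℕ) (ρ : ℝ) (U U' : Finset ℕ),
      NeighborU U U' → ∀ E : Set (Finset (Fin m)),
        (M m S ρ U).toOuterMeasure E ≤
          ENNReal.ofReal (Real.exp ε) * (M m S ρ U').toOuterMeasure E +
            ENNReal.ofReal δ)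
    (p : ℝ≥0∞)
    (hutil : ∀ (m : ℕ) (S : Fin m → Finset ℕ) (ρ : ℝ) (U : Finset ℕ),
      0 < ρ → ρ ≤ 1 →
      p ≤ (M m S ρ U).toOuterMeasure {G | pscOptimal S ρ U G}) :
    p ≤ (ENNReal.ofReal (Real.exp ε) + ENNReal.ofReal δ) /
      (1 + ENNReal.ofReal (Real.exp ε)) :=
  stmt9_general ε δ M hDP p hutil
end
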